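/- arXiv:math/0401186 — 2 statements merged into one kernel-verified Lean document; each statement's English description precedes it below -/
import Mathlib

section
/- Define a : ℝ⁴ → ℝ⁴ by a(T,x,y,λ) = (0, T·y, −T·x, (x² + y²)/2 − T²). Then for all indices i, j ∈ {0,1,2,3} and every point p = (T,x,y,λ) ∈ ℝ⁴, the (i,j) entry of Q(T,x,y) equals ∂_j a_i(p) − ∂_i a_j(p), where ∂_k denotes the partial derivative in the k-th coordinate of (T,x,y,λ). (Thus the 2-form ω is exact, ω = dα for the 1-form α with coefficient functions a, and in particular ω is closed.) -/
open Matrix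

/-- The matrix of the 2-form ω in the frame (∂_T, ∂_x, ∂_y, ∂_λ). -/
def Qmat (T x y : ℝ) : Matrix (Fin 4) (Fin 4) ℝ :=
  !![0, -y, x, 2*T;
     y, 0, 2*T, -x;
     -x, -2*T, 0, -y;
     -2*T, x, y, 0]

/-- The coefficient functions of the primitive 1-form α, in coordinates p = (T,x,y,λ):
a(T,x,y,λ) = (0, T·y, −T·x, (x²+y²)/2 − T²). -/
noncomputable def aCoeff (p : Fin 4 → ℝ) : Fin 4 → ℝ :=
  ![0, p 0 * p 2, -(p 0 * p 1), (p 1 ^ 2 + p 2 ^ 2) / 2 - p 0 ^ 2]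

theorem HasFDerivAt.div_const {𝕜 E : Type*} [NontriviallyNormedField 𝕜] [NormedAddCommGroup E]
    [NormedSpace 𝕜 E] {f : E → 𝕜} {f' : E →L[𝕜] 𝕜} {x : E} (hf : HasFDerivAt f f' x) (c : 𝕜) :
    HasFDerivAt (fun y => f y / c) (c⁻¹ • f') x := by
  simpa only [div_eq_mul_inv] using hf.mul_const c⁻¹

lemma fderiv_aCoeff_apply (i : Fin 4) (p v : Fin 4 → ℝ) :
    fderiv ℝ (fun q => aCoeff q i) p v =
      ![0, p 0 * v 2 + p 2 * v 0, -(p 0 * v 1 + p 1 * v 0),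
        p 1 * v 1 + p 2 * v 2 - 2 * p 0 * v 0] i := by
  have coord (k : Fin 4) := hasFDerivAt_apply (𝕜 := ℝ) k p
  fin_cases i
  · simp [aCoeff]
  · show fderiv ℝ (fun q => q 0 * q 2) p v = _
    simp [((coord 0).fun_mul (coord 2)).fderiv]
  · show fderiv ℝ (fun q => -(q 0 * q 1)) p v = _
    simp [((coord 0).fun_mul (coord 1)).fun_neg.fderiv]
  · show fderiv ℝ (fun q => (q 1 ^ 2 + q 2 ^ 2) / 2 - q 0 ^ 2) p v =
      p 1 * v 1 + p 2 * v 2 - 2 * p 0 * v 0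
    rw [((((coord 1).pow 2).fun_add ((coord 2).pow 2)).div_const 2
      |>.fun_sub ((coord 0).pow 2)).fderiv]
    simp only [_root_.sub_apply, _root_.add_apply, _root_.smul_apply,
      ContinuousLinearMap.proj_apply, smul_eq_mul, nsmul_eq_mul]
    ring

theorem omega_is_exact (i j : Fin 4) (p : Fin 4 → ℝ) :
    Qmat (p 0) (p 1) (p 2) i j
      = fderiv ℝ (fun q => aCoeff q i) p (Pi.single j 1)
        - fderiv ℝ (fun q => aCoeff q j) p (Pi.single i 1) := by
  rw [fderiv_aCoeff_apply, fderiv_aCoeff_apply]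
  fin_cases i <;> fin_cases j <;> simp [Qmat] <;> ring
end

section
/- For every (T,x,y) ≠ (0,0,0), the matrix J := R(T,x,y)⁻¹ · Q(T,x,y) satisfies: J·J = −1; Jᵀ·Q(T,x,y)·J = Q(T,x,y); and (Jv) · (Q(T,x,y)v) = R(T,x,y)·‖v‖² for every v ∈ ℝ⁴, which is strictly positive for v ≠ 0. Hence J defines an almost complex structure on ℝ⁴ ∖ Z compatible with the 2-form ω, with associated Riemannian metric R times the flat metric. -/
/-!
`Q` is skew-symmetric with `Q² = -R²`, so `J = R⁻¹ Q` squares to `-1`, and `Jᵀ Q J = -R⁻² Q³ = Q`.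
For the metric, `(Q v) ⬝ (Q v) = v ⬝ (Qᵀ Q v) = R² (v ⬝ v)`, whence `(J v) ⬝ (Q v) = R (v ⬝ v)`.
-/

open Matrix

/-- R(T,x,y) = √(4T² + x² + y²). -/
noncomputable def Rfun (T x y : ℝ) : ℝ := Real.sqrt (4*T^2 + x^2 + y^2)

private theorem inv_mul_inv_mul_sq {K : Type*} [Field K] {r : K} (hr : r ≠ 0) :
    r⁻¹ * r⁻¹ * r ^ 2 = 1 := by
  field_simp

namespace Matrix

variable {n : Type*} [Fintype n] [DecidableEq n]

theorem mulVec_dotProduct_mulVec_self {R : Type*} [CommRing R] {Q : Matrix n n R} {r : R}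
    (hskew : Qᵀ = -Q) (hQ : Q * Q = -(r ^ 2) • 1) (v : n → R) :
    (Q *ᵥ v) ⬝ᵥ (Q *ᵥ v) = r ^ 2 * (v ⬝ᵥ v) := by
  rw [dotProduct_mulVec, ← mulVec_transpose, mulVec_mulVec, hskew, Matrix.neg_mul, hQ, neg_smul,
    neg_neg, smul_mulVec, Matrix.one_mulVec, smul_dotProduct, smul_eq_mul]

variable {K : Type*} [Field K] {Q : Matrix n n K} {r : K}

theorem inv_smul_mul_inv_smul_eq_neg_one (hr : r ≠ 0) (hQ : Q * Q = -(r ^ 2) • 1) :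
    (r⁻¹ • Q) * (r⁻¹ • Q) = -1 := by
  rw [smul_mul_smul_comm, hQ, smul_smul, mul_neg, inv_mul_inv_mul_sq hr, neg_one_smul]

theorem transpose_inv_smul_mul_mul_inv_smul (hr : r ≠ 0) (hskew : Qᵀ = -Q)
    (hQ : Q * Q = -(r ^ 2) • 1) :
    (r⁻¹ • Q)ᵀ * Q * (r⁻¹ • Q) = Q := by
  have hcube : Qᵀ * Q * Q = r ^ 2 • Q := by
    rw [hskew, Matrix.neg_mul, Matrix.neg_mul, hQ, Matrix.smul_mul, Matrix.one_mul, neg_smul,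
      neg_neg]
  rw [transpose_smul, Matrix.smul_mul, Matrix.smul_mul, Matrix.mul_smul, hcube, smul_smul,
    smul_smul, inv_mul_inv_mul_sq hr, one_smul]

theorem inv_smul_mulVec_dotProduct_mulVec (hr : r ≠ 0) (hskew : Qᵀ = -Q)
    (hQ : Q * Q = -(r ^ 2) • 1) (v : n → K) :
    ((r⁻¹ • Q) *ᵥ v) ⬝ᵥ (Q *ᵥ v) = r * (v ⬝ᵥ v) := by
  rw [smul_mulVec, smul_dotProduct, mulVec_dotProduct_mulVec_self hskew hQ, smul_eq_mul,
    ← mul_assoc, pow_two, ← mul_assoc, inv_mul_cancel₀ hr, one_mul]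

end Matrix

theorem Qmat_transpose (T x y : ℝ) : (Qmat T x y)ᵀ = -Qmat T x y := by
  ext i j
  fin_cases i <;> fin_cases j <;> simp [Qmat]

theorem Qmat_mul_self (T x y : ℝ) :
    Qmat T x y * Qmat T x y = -(4 * T ^ 2 + x ^ 2 + y ^ 2) • 1 := by
  ext i j
  fin_cases i <;> fin_cases j <;>
    simp [Qmat, Matrix.mul_apply, Fin.sum_univ_four] <;> ring

theorem Rfun_sq (T x y : ℝ) : Rfun T x y ^ 2 = 4 * T ^ 2 + x ^ 2 + y ^ 2 :=
  Real.sq_sqrt (by positivity)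

theorem Rfun_pos {T x y : ℝ} (h : (T, x, y) ≠ (0, 0, 0)) : 0 < Rfun T x y := by
  refine Real.sqrt_pos.2 (lt_of_le_of_ne (by positivity) fun hzero => h ?_)
  have hT : T = 0 := by nlinarith [sq_nonneg T, sq_nonneg x, sq_nonneg y]
  have hx : x = 0 := by nlinarith [sq_nonneg T, sq_nonneg x, sq_nonneg y]
  have hy : y = 0 := by nlinarith [sq_nonneg T, sq_nonneg x, sq_nonneg y]
  simp [hT, hx, hy]

theorem compatible_acs_off_zero_locus (T x y : ℝ) (h : (T, x, y) ≠ ((0:ℝ), (0:ℝ), (0:ℝ))) :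
    ((Rfun T x y)⁻¹ • Qmat T x y) * ((Rfun T x y)⁻¹ • Qmat T x y)
        = -(1 : Matrix (Fin 4) (Fin 4) ℝ) ∧
    ((Rfun T x y)⁻¹ • Qmat T x y)ᵀ * Qmat T x y * ((Rfun T x y)⁻¹ • Qmat T x y)
        = Qmat T x y ∧
    (∀ v : Fin 4 → ℝ,
      (((Rfun T x y)⁻¹ • Qmat T x y).mulVec v) ⬝ᵥ ((Qmat T x y).mulVec v)
        = Rfun T x y * (v ⬝ᵥ v)) ∧
    (∀ v : Fin 4 → ℝ, v ≠ 0 →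
      0 < (((Rfun T x y)⁻¹ • Qmat T x y).mulVec v) ⬝ᵥ ((Qmat T x y).mulVec v)) := by
  have hR := Rfun_pos h
  have hQ : Qmat T x y * Qmat T x y = -(Rfun T x y ^ 2) • 1 := by
    rw [Rfun_sq, Qmat_mul_self]
  have hmetric := inv_smul_mulVec_dotProduct_mulVec hR.ne' (Qmat_transpose T x y) hQ
  refine ⟨inv_smul_mul_inv_smul_eq_neg_one hR.ne' hQ,
    transpose_inv_smul_mul_mul_inv_smul hR.ne' (Qmat_transpose T x y) hQ, hmetric,
    fun v hv => ?_⟩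
  rw [hmetric]
  exact mul_pos hR (by simpa using dotProduct_self_star_pos_iff.2 hv)
end
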